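/- Let ε > 0 and λ > 0 with √λ > ε, and let z* be the unique root in the interval (2√λ − ε, λ/ε) of the function r(z) = q_{λ,z}(r₂(z)) − q_{λ,z}(0). Then for every z ∈ ℝ: prox_{λg}(z) = {0} if |z| < z*; prox_{λg}(z) = {0, sgn(z)·r₂(z*)} if |z| = z*; and prox_{λg}(z) = {sgn(z)·r₂(|z|)} if |z| > z*. -/

import Mathlib

open Real Filter

/-- The scalar log-sum penalty `g(w) = log(1 + |w|/ε)`. -/
noncomputable def logpen (ε : ℝ) (w : ℝ) : ℝ := Real.log (1 + |w| / ε)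

/-- The objective `q_{λ,z}(x) = (1/(2λ))(x − z)² + g(x)`. -/
noncomputable def qfun (lam ε z x : ℝ) : ℝ :=
  1 / (2 * lam) * (x - z) ^ 2 + logpen ε x

/-- The proximity operator of `λ g` at `z`: the set of global minimizers of `q_{λ,z}`. -/
def prox (lam ε z : ℝ) : Set ℝ := {x | ∀ y : ℝ, qfun lam ε z x ≤ qfun lam ε z y}

/-- `r₁(z) = (z − ε)/2 − √((z + ε)²/4 − λ)`. -/
noncomputable def r1 (lam ε z : ℝ) : ℝ :=
  (z - ε) / 2 - Real.sqrt ((z + ε) ^ 2 / 4 - lam)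

/-- `r₂(z) = (z − ε)/2 + √((z + ε)²/4 − λ)`. -/
noncomputable def r2 (lam ε z : ℝ) : ℝ :=
  (z - ε) / 2 + Real.sqrt ((z + ε) ^ 2 / 4 - lam)

/-- `r(z) = q_{λ,z}(r₂(z)) − q_{λ,z}(0)`. -/
noncomputable def rfun (lam ε z : ℝ) : ℝ :=
  qfun lam ε z (r2 lam ε z) - qfun lam ε z 0

/-- The iteratively reweighted ℓ₁ iteration for `prox_{λ g}(z)`. -/
def IterRW (lam ε z : ℝ) (x : ℕ → ℝ) : Prop :=
  ∀ k : ℕ, x (k + 1) =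
    if |z| ≤ lam / (ε + |x k|) then 0
    else Real.sign z * (|z| - lam / (ε + |x k|))

/-!
By the symmetry `q_{λ,-z}(-x) = q_{λ,z}(x)` we may take `z ≥ 0`, and then `|x|` is never worse
than `x`. For `x > 0`, `q_{λ,z}'(x)` has the sign of `(x - z)(ε + x) + λ`, whose roots `r₁ ≤ r₂`
are real exactly when `z ≥ 2√λ - ε`. Below that threshold `q_{λ,z}` increases on `[0, ∞)`, so `0`
is the unique minimizer. Above it `q_{λ,z}` increases on `[0, r₁]`, decreases on `[r₁, r₂]` and
increases on `[r₂, ∞)`, so the minimizers are among `0` and `r₂(z)`, decided by the sign of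
`r(z)`. Finally `r` is strictly decreasing: `q_{λ,z'}(x) - q_{λ,z'}(0)` equals
`q_{λ,z}(x) - q_{λ,z}(0) - x(z' - z)/λ`, and `r₂(z) ≥ √λ - ε ≥ r₁(z')` lies where `r₂(z')` is the
minimizer of `q_{λ,z'}`. Hence the sign of `r(z)` is that of `z* - z`.
-/

open Set

section Minimizers

variable {α β : Type*} [LinearOrder β] {f : α → β} {a b : α}

theorem setOf_forall_le_eq_singleton (h : ∀ y ≠ a, f a < f y) :
    {x | ∀ y, f x ≤ f y} = {a} := by
  ext x
  refine ⟨fun hx => ?_, fun hx y => ?_⟩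
  · by_contra hxa
    exact (h x hxa).not_ge (hx a)
  · rw [mem_singleton_iff.1 hx]
    rcases eq_or_ne y a with rfl | hya
    exacts [le_rfl, (h y hya).le]

theorem setOf_forall_le_eq_pair (h : ∀ y, y ≠ a → y ≠ b → min (f a) (f b) < f y)
    (hab : f a = f b) : {x | ∀ y, f x ≤ f y} = {a, b} := by
  have hmin : ∀ y, f a ≤ f y := fun y => by
    rcases eq_or_ne y a with rfl | hya
    · exact le_rfl
    rcases eq_or_ne y b with rfl | hyb
    · exact hab.le
    simpa [hab] using (h y hya hyb).le
  ext x
  refine ⟨fun hx => ?_, ?_⟩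
  · by_contra hx'
    simp only [mem_insert_iff, mem_singleton_iff, not_or] at hx'
    have := h x hx'.1 hx'.2
    rw [← hab, min_self] at this
    exact this.not_ge (hx a)
  · rintro (rfl | rfl) y
    exacts [hmin y, hab ▸ hmin y]

theorem forall_ne_lt_of_min_lt (h : ∀ y, y ≠ a → y ≠ b → min (f a) (f b) < f y)
    (hab : f a < f b) : ∀ y ≠ a, f a < f y := fun y hya => by
  rcases eq_or_ne y b with rfl | hyb
  · exact hab
  simpa [min_eq_left hab.le] using h y hya hyb

end Minimizers

section Objective

variable {lam ε z : ℝ}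

theorem qfun_neg_neg (lam ε z x : ℝ) : qfun lam ε (-z) (-x) = qfun lam ε z x := by
  simp only [qfun, logpen, abs_neg]
  ring

theorem prox_neg (lam ε z : ℝ) : prox lam ε (-z) = -prox lam ε z := by
  ext x
  simp only [prox, mem_ofPred_eq, Set.mem_neg]
  refine ⟨fun hx y => ?_, fun hx y => ?_⟩
  · rw [← qfun_neg_neg lam ε z (-x), ← qfun_neg_neg lam ε z y, neg_neg]
    exact hx (-y)
  · rw [← neg_neg x, ← neg_neg y, qfun_neg_neg, qfun_neg_neg]
    exact hx (-y)

theorem qfun_abs_le (hlam : 0 < lam) (hz : 0 ≤ z) (y : ℝ) :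
    qfun lam ε z |y| ≤ qfun lam ε z y := by
  simp only [qfun, logpen, abs_abs, add_le_add_iff_right]
  gcongr 1 / (2 * lam) * ?_
  nlinarith [sq_abs y, le_abs_self y]

theorem qfun_abs_lt (hlam : 0 < lam) (hz : 0 < z) {y : ℝ} (hy : y < 0) :
    qfun lam ε z |y| < qfun lam ε z y := by
  simp only [qfun, logpen, abs_abs, add_lt_add_iff_right]
  gcongr 1 / (2 * lam) * ?_
  nlinarith [sq_abs y, abs_of_neg hy]

theorem qfun_sub_qfun_zero (lam ε z z' x : ℝ) :
    qfun lam ε z' x - qfun lam ε z' 0 = qfun lam ε z x - qfun lam ε z 0 - x * (z' - z) / lam := by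
  simp only [qfun]
  ring

theorem continuous_qfun (hε : 0 < ε) : Continuous (qfun lam ε z) := by
  unfold qfun logpen
  fun_prop (disch := intro x; positivity)

def qnum (lam ε z x : ℝ) : ℝ := (x - z) * (ε + x) + lam

theorem hasDerivAt_qfun (hε : 0 < ε) (hlam : lam ≠ 0) {x : ℝ} (hx : 0 < x) :
    HasDerivAt (qfun lam ε z) (qnum lam ε z x / (lam * (ε + x))) x := by
  have hq : (fun y => 1 / (2 * lam) * (y - z) ^ 2 + Real.log (1 + y / ε)) =ᶠ[nhds x]
      qfun lam ε z := by
    filter_upwards [eventually_gt_nhds hx] with y hy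
    simp [qfun, logpen, abs_of_pos hy]
  refine HasDerivAt.congr_of_eventuallyEq ?_ hq.symm
  have hsq : HasDerivAt (fun y => 1 / (2 * lam) * (y - z) ^ 2) ((x - z) / lam) x := by
    refine ((((hasDerivAt_id' x).sub_const z).fun_pow 2).const_mul _).congr_deriv ?_
    field_simp
    ring
  have hlog : HasDerivAt (fun y => Real.log (1 + y / ε)) (1 / (ε + x)) x := by
    convert ((((hasDerivAt_id' x).div_const ε).const_add 1).log (by positivity)) using 1
    field_simp
  refine (hsq.add hlog).congr_deriv ?_
  simp only [qnum]
  field_simp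

theorem interior_subset_Ioi_of_subset_Ici {s : Set ℝ} (hs : s ⊆ Ici 0) : interior s ⊆ Ioi 0 :=
  interior_Ici (a := (0 : ℝ)) ▸ interior_mono hs

theorem strictMonoOn_qfun (hε : 0 < ε) (hlam : 0 < lam) {s : Set ℝ} (hs : Convex ℝ s)
    (hs0 : s ⊆ Ici 0) (hp : ∀ x ∈ interior s, 0 < qnum lam ε z x) :
    StrictMonoOn (qfun lam ε z) s := by
  refine strictMonoOn_of_deriv_pos hs (continuous_qfun hε).continuousOn fun x hx => ?_
  have hx0 : 0 < x := interior_subset_Ioi_of_subset_Ici hs0 hx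
  rw [(hasDerivAt_qfun hε hlam.ne' hx0).deriv]
  exact div_pos (hp x hx) (by positivity)

theorem strictAntiOn_qfun (hε : 0 < ε) (hlam : 0 < lam) {s : Set ℝ} (hs : Convex ℝ s)
    (hs0 : s ⊆ Ici 0) (hp : ∀ x ∈ interior s, qnum lam ε z x < 0) :
    StrictAntiOn (qfun lam ε z) s := by
  refine strictAntiOn_of_deriv_neg hs (continuous_qfun hε).continuousOn fun x hx => ?_
  have hx0 : 0 < x := interior_subset_Ioi_of_subset_Ici hs0 hx
  rw [(hasDerivAt_qfun hε hlam.ne' hx0).deriv]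
  exact div_neg_of_neg_of_pos (hp x hx) (by positivity)

end Objective

section Roots

variable {lam ε z : ℝ}

theorem discr_nonneg (hlam : 0 ≤ lam) (hz : 2 * √lam - ε ≤ z) : 0 ≤ (z + ε) ^ 2 / 4 - lam := by
  nlinarith [sq_sqrt hlam, sqrt_nonneg lam]

theorem qnum_eq_mul (hlam : 0 ≤ lam) (hz : 2 * √lam - ε ≤ z) (x : ℝ) :
    qnum lam ε z x = (x - r1 lam ε z) * (x - r2 lam ε z) := by
  have hs := sq_sqrt (discr_nonneg hlam hz)
  simp only [qnum, r1, r2]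
  linear_combination hs

theorem qnum_pos (hlam : 0 ≤ lam) (hz0 : -ε ≤ z) (hz : z < 2 * √lam - ε) (x : ℝ) :
    0 < qnum lam ε z x := by
  simp only [qnum]
  nlinarith [sq_sqrt hlam, sqrt_nonneg lam, sq_nonneg (x + (ε - z) / 2)]

theorem r1_le_r2 : r1 lam ε z ≤ r2 lam ε z := by
  simp only [r1, r2]
  linarith [sqrt_nonneg ((z + ε) ^ 2 / 4 - lam)]

theorem sqrt_sub_le_r2 (hz : 2 * √lam - ε ≤ z) : √lam - ε ≤ r2 lam ε z := by
  simp only [r2]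
  linarith [sqrt_nonneg ((z + ε) ^ 2 / 4 - lam)]

theorem r2_pos (h : ε < √lam) (hz : 2 * √lam - ε ≤ z) : 0 < r2 lam ε z := by
  linarith [sqrt_sub_le_r2 hz]

theorem r1_le_sqrt_sub (hlam : 0 ≤ lam) (hz : 2 * √lam - ε ≤ z) : r1 lam ε z ≤ √lam - ε := by
  have ha : √lam ≤ (z + ε) / 2 := by linarith
  have hD : ((z + ε) / 2 - √lam) ^ 2 ≤ (z + ε) ^ 2 / 4 - lam := by
    nlinarith [sq_sqrt hlam, sqrt_nonneg lam]
  have := le_sqrt_of_sq_le hD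
  simp only [r1]
  linarith

end Roots

section Minimization

variable {lam ε z : ℝ}

theorem qfun_zero_lt_of_lt_two_sqrt_sub (hε : 0 < ε) (hlam : 0 < lam) (hz0 : 0 ≤ z)
    (hz : z < 2 * √lam - ε) {y : ℝ} (hy : y ≠ 0) : qfun lam ε z 0 < qfun lam ε z y := by
  have hmono : StrictMonoOn (qfun lam ε z) (Ici 0) :=
    strictMonoOn_qfun hε hlam (convex_Ici 0) subset_rfl
      fun x _ => qnum_pos hlam.le (by linarith) hz x
  have hy' : 0 < |y| := abs_pos.2 hy
  calc qfun lam ε z 0 < qfun lam ε z |y| := hmono self_mem_Ici hy'.le hy'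
    _ ≤ qfun lam ε z y := qfun_abs_le hlam hz0 y

theorem qfun_zero_lt_of_le_r1 (hε : 0 < ε) (hlam : 0 < lam) (hz : 2 * √lam - ε ≤ z) {y : ℝ}
    (hy0 : 0 < y) (hy : y ≤ r1 lam ε z) : qfun lam ε z 0 < qfun lam ε z y := by
  have hmono : StrictMonoOn (qfun lam ε z) (Icc 0 (r1 lam ε z)) := by
    refine strictMonoOn_qfun hε hlam (convex_Icc _ _) Icc_subset_Ici_self fun x hx => ?_
    rw [interior_Icc] at hx
    rw [qnum_eq_mul hlam.le hz]
    nlinarith [hx.2, r1_le_r2 (lam := lam) (ε := ε) (z := z)]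
  exact hmono ⟨le_rfl, hy0.le.trans hy⟩ ⟨hy0.le, hy⟩ hy0

theorem qfun_r2_lt (hε : 0 < ε) (hlam : 0 < lam) (h : ε < √lam) (hz : 2 * √lam - ε ≤ z)
    {y : ℝ} (hy0 : 0 ≤ y) (hy : r1 lam ε z ≤ y) (hne : y ≠ r2 lam ε z) :
    qfun lam ε z (r2 lam ε z) < qfun lam ε z y := by
  have hr2 := r2_pos h hz
  rcases hne.lt_or_gt with hlt | hgt
  · have hanti : StrictAntiOn (qfun lam ε z) (Icc (max (r1 lam ε z) 0) (r2 lam ε z)) := by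
      refine strictAntiOn_qfun hε hlam (convex_Icc _ _)
        (fun x hx => le_trans (le_max_right _ _) hx.1) fun x hx => ?_
      rw [interior_Icc] at hx
      rw [qnum_eq_mul hlam.le hz]
      nlinarith [(le_max_left _ _).trans_lt hx.1, hx.2]
    have hy' : max (r1 lam ε z) 0 ≤ y := max_le hy hy0
    exact hanti ⟨hy', hlt.le⟩ ⟨hy'.trans hlt.le, le_rfl⟩ hlt
  · have hmono : StrictMonoOn (qfun lam ε z) (Ici (r2 lam ε z)) := by
      refine strictMonoOn_qfun hε hlam (convex_Ici _) (Ici_subset_Ici.2 hr2.le) fun x hx => ?_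
      rw [interior_Ici] at hx
      rw [qnum_eq_mul hlam.le hz]
      nlinarith [r1_le_r2 (lam := lam) (ε := ε) (z := z), mem_Ioi.1 hx]
    exact hmono self_mem_Ici hgt.le hgt

theorem qfun_r2_le (hε : 0 < ε) (hlam : 0 < lam) (h : ε < √lam) (hz : 2 * √lam - ε ≤ z)
    {y : ℝ} (hy0 : 0 ≤ y) (hy : r1 lam ε z ≤ y) :
    qfun lam ε z (r2 lam ε z) ≤ qfun lam ε z y := by
  rcases eq_or_ne y (r2 lam ε z) with rfl | hne
  exacts [le_rfl, (qfun_r2_lt hε hlam h hz hy0 hy hne).le]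

theorem min_qfun_lt (hε : 0 < ε) (hlam : 0 < lam) (h : ε < √lam) (hz : 2 * √lam - ε ≤ z)
    {y : ℝ} (hy0 : y ≠ 0) (hy2 : y ≠ r2 lam ε z) :
    min (qfun lam ε z 0) (qfun lam ε z (r2 lam ε z)) < qfun lam ε z y := by
  have hpos : ∀ y, 0 < y → y ≠ r2 lam ε z →
      min (qfun lam ε z 0) (qfun lam ε z (r2 lam ε z)) < qfun lam ε z y := fun y hy hy2 => by
    rcases le_or_gt y (r1 lam ε z) with hr1 | hr1
    · exact (min_le_left _ _).trans_lt (qfun_zero_lt_of_le_r1 hε hlam hz hy hr1)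
    · exact (min_le_right _ _).trans_lt (qfun_r2_lt hε hlam h hz hy.le hr1.le hy2)
  rcases hy0.lt_or_gt with hneg | hy
  · have hmin : min (qfun lam ε z 0) (qfun lam ε z (r2 lam ε z)) ≤ qfun lam ε z |y| := by
      rcases eq_or_ne |y| (r2 lam ε z) with h2 | h2
      · exact h2 ▸ min_le_right _ _
      · exact (hpos _ (abs_pos.2 hy0) h2).le
    exact hmin.trans_lt (qfun_abs_lt hlam (by linarith) hneg)
  · exact hpos y hy hy2

theorem rfun_strictAntiOn (hε : 0 < ε) (hlam : 0 < lam) (h : ε < √lam) :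
    StrictAntiOn (rfun lam ε) (Ici (2 * √lam - ε)) := fun z hz z' hz' hzz => by
  have hr2 := r2_pos h hz
  have hle : qfun lam ε z' (r2 lam ε z') ≤ qfun lam ε z' (r2 lam ε z) :=
    qfun_r2_le hε hlam h hz' hr2.le
      ((r1_le_sqrt_sub hlam.le hz').trans (sqrt_sub_le_r2 hz))
  have hshift := qfun_sub_qfun_zero lam ε z z' (r2 lam ε z)
  have hdrop : 0 < r2 lam ε z * (z' - z) / lam := by
    have : 0 < z' - z := sub_pos.2 hzz
    positivity
  simp only [rfun]
  linarith

end Minimization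

section Prox

variable {lam ε w : ℝ}

theorem prox_eq_of_two_sqrt_sub_le (hε : 0 < ε) (hlam : 0 < lam) (h : ε < √lam)
    (hw : 2 * √lam - ε ≤ w) :
    (0 < rfun lam ε w → prox lam ε w = {0}) ∧
    (rfun lam ε w = 0 → prox lam ε w = {0, r2 lam ε w}) ∧
    (rfun lam ε w < 0 → prox lam ε w = {r2 lam ε w}) := by
  have hmin := fun y => min_qfun_lt hε hlam h hw (y := y)
  simp only [rfun]
  refine ⟨fun hr => ?_, fun hr => ?_, fun hr => ?_⟩
  · exact setOf_forall_le_eq_singleton (forall_ne_lt_of_min_lt hmin (by linarith))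
  · exact setOf_forall_le_eq_pair hmin (by linarith)
  · refine setOf_forall_le_eq_singleton (forall_ne_lt_of_min_lt (fun y h2 h0 => ?_) (by linarith))
    rw [min_comm]
    exact hmin y h0 h2

theorem prox_formula_of_nonneg (hε : 0 < ε) (hlam : 0 < lam) (h : ε < √lam) {zs : ℝ}
    (hzs : 2 * √lam - ε < zs) (hroot : rfun lam ε zs = 0) (hw0 : 0 ≤ w) :
    (w < zs → prox lam ε w = {0}) ∧
    (w = zs → prox lam ε w = {0, r2 lam ε zs}) ∧
    (zs < w → prox lam ε w = {r2 lam ε w}) := by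
  refine ⟨fun hlt => ?_, fun heq => ?_, fun hgt => ?_⟩
  · rcases lt_or_ge w (2 * √lam - ε) with hsmall | hw
    · exact setOf_forall_le_eq_singleton
        fun y hy => qfun_zero_lt_of_lt_two_sqrt_sub hε hlam hw0 hsmall hy
    · refine (prox_eq_of_two_sqrt_sub_le hε hlam h hw).1 ?_
      simpa [hroot] using rfun_strictAntiOn hε hlam h hw hzs.le hlt
  · subst heq
    exact (prox_eq_of_two_sqrt_sub_le hε hlam h hzs.le).2.1 hroot
  · refine (prox_eq_of_two_sqrt_sub_le hε hlam h (hzs.trans hgt).le).2.2 ?_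
    simpa [hroot] using rfun_strictAntiOn hε hlam h hzs.le (hzs.trans hgt).le hgt

end Prox

/-- explicit form of `prox_{λg}` when `√λ > ε`. -/
theorem prox_formula_sqrt_gt (ε lam zs : ℝ) (hε : 0 < ε) (hlam : 0 < lam)
    (h : ε < Real.sqrt lam)
    (hzs : zs ∈ Set.Ioo (2 * Real.sqrt lam - ε) (lam / ε))
    (hroot : rfun lam ε zs = 0) (z : ℝ) :
    (|z| < zs → prox lam ε z = {0}) ∧
    (|z| = zs → prox lam ε z = {0, Real.sign z * r2 lam ε zs}) ∧
    (zs < |z| → prox lam ε z = {Real.sign z * r2 lam ε |z|}) := by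
  have hzs0 : 0 < zs := by linarith [hzs.1]
  have hformula := fun w => prox_formula_of_nonneg (w := w) hε hlam h hzs.1 hroot
  rcases lt_trichotomy z 0 with hz | rfl | hz
  · obtain ⟨w, hw, rfl⟩ : ∃ w, 0 < w ∧ z = -w := ⟨-z, by linarith, by ring⟩
    obtain ⟨hlt, heq, hgt⟩ := hformula w hw.le
    simp only [abs_neg, abs_of_pos hw, Real.sign_neg, Real.sign_of_pos hw, prox_neg]
    refine ⟨fun h => ?_, fun h => ?_, fun h => ?_⟩
    · simp [hlt h]
    · simp [heq h]
    · simp [hgt h]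
  · simpa [hzs0.ne, hzs0.not_gt] using (hformula 0 le_rfl).1
  · simpa [abs_of_pos hz, Real.sign_of_pos hz] using hformula z hz.le
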